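/- Suppose x : ℝ → ℝⁿ is continuous and there exist positive constants λ_Q, c such that the continuous function V(t) = e(t)ᵀPe(t) + W(t), with P symmetric positive definite, W(t) ≥ 0 bounded, and e = x − x_r, is nonincreasing whenever ‖e(t)‖ ≥ 2c/λ_Q. Then e is bounded: ‖e(t)‖² ≤ max{ V(t0), λ̄_P·(2c/λ_Q)² + sup W }/λ_min(P) for all t ≥ t0, where λ_min(P) and λ̄_P are the minimum and maximum eigenvalues of P. -/

import Mathlib

/-!
The Rayleigh bounds give `λ_min ‖e‖² ≤ V` and, as long as `‖e‖ < 2c/λ_Q`,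
`V ≤ λ̄_P (2c/λ_Q)² + sup W ≤ M`, where `M` is the maximum in the claimed bound. Hence `e` lies
outside that ball whenever `V > M`, and there `V` does not increase. A continuous function that
starts at or below `M` and cannot increase while above `M` never exceeds `M`: otherwise look at
the last time before `t` at which it was `≤ M`.
-/

open Matrix Topology Filter

namespace Matrix.IsHermitian

variable {ι : Type*} [Fintype ι] [DecidableEq ι] {A : Matrix ι ι ℝ}

lemma inner_eigenvectorBasis_mulVec (hA : A.IsHermitian) (v : EuclideanSpace ℝ ι) (i : ι) :
    inner ℝ (hA.eigenvectorBasis i) (WithLp.toLp 2 (A *ᵥ v)) =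
      hA.eigenvalues i * inner ℝ (hA.eigenvectorBasis i) v := by
  have hAT : Aᵀ = A := hA
  simp only [EuclideanSpace.inner_eq_star_dotProduct, star_trivial]
  rw [dotProduct_comm, dotProduct_mulVec, ← mulVec_transpose, hAT,
    hA.mulVec_eigenvectorBasis, smul_dotProduct, smul_eq_mul, dotProduct_comm]

lemma dotProduct_mulVec_eq_sum_eigenvalues (hA : A.IsHermitian) (v : EuclideanSpace ℝ ι) :
    (v : ι → ℝ) ⬝ᵥ A *ᵥ v =
      ∑ i, hA.eigenvalues i * inner ℝ (hA.eigenvectorBasis i) v ^ 2 := by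
  have hdot : (v : ι → ℝ) ⬝ᵥ A *ᵥ v = inner ℝ v (WithLp.toLp 2 (A *ᵥ v)) := by
    simp [EuclideanSpace.inner_eq_star_dotProduct, dotProduct_comm]
  rw [hdot, ← hA.eigenvectorBasis.sum_inner_mul_inner]
  refine Finset.sum_congr rfl fun i _ => ?_
  rw [inner_eigenvectorBasis_mulVec, real_inner_comm v]
  ring

lemma iInf_eigenvalues_mul_norm_sq_le (hA : A.IsHermitian) (v : EuclideanSpace ℝ ι) :
    (⨅ i, hA.eigenvalues i) * ‖v‖ ^ 2 ≤ (v : ι → ℝ) ⬝ᵥ A *ᵥ v := by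
  rw [hA.dotProduct_mulVec_eq_sum_eigenvalues, ← hA.eigenvectorBasis.sum_sq_inner_right v,
    Finset.mul_sum]
  gcongr with i
  exact ciInf_le (Set.finite_range _).bddBelow i

lemma dotProduct_mulVec_le_iSup_eigenvalues_mul_norm_sq (hA : A.IsHermitian)
    (v : EuclideanSpace ℝ ι) :
    (v : ι → ℝ) ⬝ᵥ A *ᵥ v ≤ (⨆ i, hA.eigenvalues i) * ‖v‖ ^ 2 := by
  rw [hA.dotProduct_mulVec_eq_sum_eigenvalues, ← hA.eigenvectorBasis.sum_sq_inner_right v,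
    Finset.mul_sum]
  gcongr with i
  exact le_ciSup (Set.finite_range _).bddAbove i

end Matrix.IsHermitian

namespace Matrix.PosDef

variable {ι : Type*} [Fintype ι] [DecidableEq ι] {A : Matrix ι ι ℝ}

lemma iInf_eigenvalues_pos [Nonempty ι] (hA : A.PosDef) : 0 < ⨅ i, hA.1.eigenvalues i := by
  obtain ⟨i, hi⟩ := exists_eq_ciInf_of_finite (f := hA.1.eigenvalues)
  exact hi ▸ hA.eigenvalues_pos i

lemma iSup_eigenvalues_nonneg (hA : A.PosDef) : 0 ≤ ⨆ i, hA.1.eigenvalues i :=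
  Real.iSup_nonneg fun i => (hA.eigenvalues_pos i).le

end Matrix.PosDef

theorem Continuous.le_of_nonincreasing_above {V : ℝ → ℝ} (hV : Continuous V) {t₀ M : ℝ}
    (h₀ : V t₀ ≤ M)
    (hdec : ∀ t₁ t₂, t₀ ≤ t₁ → t₁ ≤ t₂ → (∀ s ∈ Set.Icc t₁ t₂, M < V s) → V t₂ ≤ V t₁)
    {t : ℝ} (ht : t₀ ≤ t) : V t ≤ M := by
  by_contra! hMt
  obtain ⟨t₁, ⟨⟨ht₀₁, ht₁t⟩, hVt₁⟩, hlast⟩ : ∃ t₁, IsGreatest {s ∈ Set.Icc t₀ t | V s ≤ M} t₁ :=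
    (isCompact_Icc.inter_right (isClosed_le hV continuous_const)).exists_isGreatest
      ⟨t₀, ⟨le_rfl, ht⟩, h₀⟩
  have ht₁t : t₁ < t := ht₁t.lt_of_ne (by rintro rfl; linarith)
  have habove : ∀ s ∈ Set.Ioc t₁ t, M < V s := fun s hs =>
    not_le.1 fun hle => hs.1.not_ge (hlast ⟨⟨ht₀₁.trans hs.1.le, hs.2⟩, hle⟩)
  have hVt_le : ∀ s ∈ Set.Ioc t₁ t, V t ≤ V s := fun s hs =>
    hdec s t (ht₀₁.trans hs.1.le) hs.2 fun u hu => habove u ⟨hs.1.trans_le hu.1, hu.2⟩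
  have : (𝓝[Set.Ioc t₁ t] t₁).NeBot := left_nhdsWithin_Ioc_neBot ht₁t
  have : V t ≤ V t₁ := ge_of_tendsto (hV.continuousWithinAt (s := Set.Ioc t₁ t))
    (eventually_mem_nhdsWithin.mono hVt_le)
  linarith

theorem stmt_12_general {n : ℕ} (P : Matrix (Fin n) (Fin n) ℝ)
    (hPsymm : P.IsHermitian) (hPpd : P.PosDef)
    (W : ℝ → ℝ) (Wsup : ℝ) (hW0 : ∀ t, 0 ≤ W t) (hWb : ∀ t, W t ≤ Wsup)
    (lamQ c : ℝ)
    (e : ℝ → EuclideanSpace ℝ (Fin n))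
    (V : ℝ → ℝ)
    (hV : ∀ t, V t = (e t : Fin n → ℝ) ⬝ᵥ P.mulVec (e t : Fin n → ℝ) + W t)
    (hVcont : Continuous V) (t0 : ℝ)
    (hdec : ∀ t1 t2, t0 ≤ t1 → t1 ≤ t2 →
      (∀ s ∈ Set.Icc t1 t2, 2 * c / lamQ ≤ ‖e s‖) → V t2 ≤ V t1) :
    ∀ t, t0 ≤ t →
      ‖e t‖ ^ 2 ≤
        max (V t0) ((⨆ i, hPsymm.eigenvalues i) * (2 * c / lamQ) ^ 2 + Wsup) /
          (⨅ i, hPsymm.eigenvalues i) := by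
  intro t ht
  rcases isEmpty_or_nonempty (Fin n) with _ | _
  · simp [Subsingleton.elim (e t) 0]
  set r := 2 * c / lamQ
  set M := max (V t0) ((⨆ i, hPsymm.eigenvalues i) * r ^ 2 + Wsup)
  have hfar : ∀ s, M < V s → r ≤ ‖e s‖ := by
    intro s hMs
    by_contra! hnear
    have : V s ≤ (⨆ i, hPsymm.eigenvalues i) * r ^ 2 + Wsup := calc
      V s = (e s : Fin n → ℝ) ⬝ᵥ P *ᵥ e s + W s := hV s
      _ ≤ (⨆ i, hPsymm.eigenvalues i) * ‖e s‖ ^ 2 + Wsup :=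
        add_le_add (hPsymm.dotProduct_mulVec_le_iSup_eigenvalues_mul_norm_sq _) (hWb s)
      _ ≤ (⨆ i, hPsymm.eigenvalues i) * r ^ 2 + Wsup := by
        gcongr
        exact hPpd.iSup_eigenvalues_nonneg
    exact hMs.not_ge (this.trans (le_max_right _ _))
  have hVM : V t ≤ M := hVcont.le_of_nonincreasing_above (le_max_left _ _)
    (fun t₁ t₂ h₀₁ h₁₂ hM => hdec t₁ t₂ h₀₁ h₁₂ fun s hs => hfar s (hM s hs)) ht
  rw [le_div_iff₀ hPpd.iInf_eigenvalues_pos, mul_comm]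
  calc (⨅ i, hPsymm.eigenvalues i) * ‖e t‖ ^ 2
      ≤ (e t : Fin n → ℝ) ⬝ᵥ P *ᵥ e t + W t :=
        le_add_of_le_of_nonneg (hPsymm.iInf_eigenvalues_mul_norm_sq_le _) (hW0 t)
    _ = V t := (hV t).symm
    _ ≤ M := hVM

theorem stmt_12 {n : ℕ} (P : Matrix (Fin n) (Fin n) ℝ)
    (hPsymm : P.IsHermitian) (hPpd : P.PosDef)
    (x xr : ℝ → EuclideanSpace ℝ (Fin n)) (hx : Continuous x)
    (W : ℝ → ℝ) (Wsup : ℝ) (hW0 : ∀ t, 0 ≤ W t) (hWb : ∀ t, W t ≤ Wsup)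
    (lamQ c : ℝ) (hlamQ : 0 < lamQ) (hc : 0 < c)
    (e : ℝ → EuclideanSpace ℝ (Fin n)) (he : ∀ t, e t = x t - xr t)
    (V : ℝ → ℝ)
    (hV : ∀ t, V t = (e t : Fin n → ℝ) ⬝ᵥ P.mulVec (e t : Fin n → ℝ) + W t)
    (hVcont : Continuous V) (t0 : ℝ)
    (hdec : ∀ t1 t2, t0 ≤ t1 → t1 ≤ t2 →
      (∀ s ∈ Set.Icc t1 t2, 2 * c / lamQ ≤ ‖e s‖) → V t2 ≤ V t1) :
    ∀ t, t0 ≤ t →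
      ‖e t‖ ^ 2 ≤
        max (V t0) ((⨆ i, hPsymm.eigenvalues i) * (2 * c / lamQ) ^ 2 + Wsup) /
          (⨅ i, hPsymm.eigenvalues i) :=
  stmt_12_general P hPsymm hPpd W Wsup hW0 hWb lamQ c e V hV hVcont t0 hdec
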